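/- arXiv:1012.2350 — 5 statements merged into one kernel-verified Lean document; each statement's English description precedes it below -/
import Mathlib

section
/- The set of channel-coefficient tuples (F11, F12, F21, F22, G11, G12, G21, G22) ∈ ℂ^8 for which there exists a pair of amplification factors (α1, α2) ≠ (0, 0) satisfying both interference-neutralization equations F11·α1·G21 + F21·α2·G22 = 0 and F12·α1·G11 + F22·α2·G12 = 0 is contained in the zero set of the polynomial F11·G21·F22·G12 − F21·G22·F12·G11, and hence has Lebesgue measure zero (identifying ℂ^8 with ℝ^16 equipped with Lebesgue measure). -/
open MeasureTheory

private lemma hyperplane_null (i : Fin 8) :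
    volume {c : Fin 8 → ℂ | c i = 0} = 0 := by
  rw [volume_pi]
  exact Measure.pi_hyperplane _ i 0

private lemma badset_null :
    volume {c : Fin 8 → ℂ | c 0 * c 6 * c 3 * c 5 - c 2 * c 7 * c 1 * c 4 = 0 ∧
      c 3 * c 5 * c 6 ≠ 0} = 0 := by
  set S : Set (Fin 8 → ℂ) := {c | c 0 * c 6 * c 3 * c 5 - c 2 * c 7 * c 1 * c 4 = 0 ∧
      c 3 * c 5 * c 6 ≠ 0} with hS
  have hPc : Continuous fun c : Fin 8 → ℂ => c 0 * c 6 * c 3 * c 5 - c 2 * c 7 * c 1 * c 4 := by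
    fun_prop
  have hQc : Continuous fun c : Fin 8 → ℂ => c 3 * c 5 * c 6 := by fun_prop
  have hSm : MeasurableSet S := by
    apply ((isClosed_eq hPc continuous_const).measurableSet).inter
    exact ((isClosed_eq hQc continuous_const).measurableSet).compl
  set e := MeasurableEquiv.piFinSuccAbove (fun _ : Fin 8 => ℂ) 0 with he
  have hmp := measurePreserving_piFinSuccAbove (fun _ : Fin 8 => (volume : Measure ℂ)) 0
  set ν : Measure (Fin 7 → ℂ) := Measure.pi fun _ => volume with hν
  set t : Set (ℂ × (Fin 7 → ℂ)) := e.symm ⁻¹' S with ht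
  have htm : MeasurableSet t := e.symm.measurable hSm
  have hst : S = e ⁻¹' t := by
    ext c
    simp [ht]
  have hvol : volume S = ((volume : Measure ℂ).prod ν) t := by
    rw [volume_pi, hst]
    exact hmp.measure_preimage htm.nullMeasurableSet
  rw [hvol]
  -- swap so slices are over the first complex coordinate
  set u : Set ((Fin 7 → ℂ) × ℂ) := Prod.swap ⁻¹' t with hu
  have hum : MeasurableSet u := measurable_swap htm
  have hswap : ((volume : Measure ℂ).prod ν) t = (ν.prod volume) u := by
    rw [← Measure.prod_swap, Measure.map_apply measurable_swap htm]
  rw [hswap]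
  rw [Measure.measure_prod_null hum]
  refine Filter.Eventually.of_forall fun y => ?_
  have hsub : (Prod.mk y ⁻¹' u).Subsingleton := by
    intro x1 hx1 x2 hx2
    have hx1' : (Fin.cons x1 y : Fin 8 → ℂ) ∈ S := hx1
    have hx2' : (Fin.cons x2 y : Fin 8 → ℂ) ∈ S := hx2
    obtain ⟨h1, hA⟩ := hx1'
    obtain ⟨h2, -⟩ := hx2'
    have h1' : x1 * y 5 * y 2 * y 4 - y 1 * y 6 * y 0 * y 3 = 0 := h1
    have h2' : x2 * y 5 * y 2 * y 4 - y 1 * y 6 * y 0 * y 3 = 0 := h2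
    have hA' : y 2 * y 4 * y 5 ≠ 0 := hA
    have hdiff : (x1 - x2) * (y 2 * y 4 * y 5) = 0 := by
      linear_combination h1' - h2'
    rcases mul_eq_zero.1 hdiff with h | h
    · exact sub_eq_zero.1 h
    · exact absurd h hA'
  exact hsub.measure_zero _

/-- Exact interference neutralization with two amplify-and-forward relays is
impossible for generic channel coefficients: the set of channel tuples
`(F11, F12, F21, F22, G11, G12, G21, G22) ∈ ℂ^8` (encoded as `c : Fin 8 → ℂ`
with `c 0 = F11, c 1 = F12, c 2 = F21, c 3 = F22, c 4 = G11, c 5 = G12,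
c 6 = G21, c 7 = G22`) admitting a nonzero pair of amplification factors
satisfying both neutralization equations is contained in the zero set of
`F11·G21·F22·G12 − F21·G22·F12·G11`, and hence has Lebesgue measure zero. -/
theorem neutralization_impossible_generic :
    {c : Fin 8 → ℂ | ∃ α1 α2 : ℂ, (α1, α2) ≠ (0, 0) ∧
        c 0 * α1 * c 6 + c 2 * α2 * c 7 = 0 ∧
        c 1 * α1 * c 4 + c 3 * α2 * c 5 = 0}
      ⊆ {c : Fin 8 → ℂ | c 0 * c 6 * c 3 * c 5 - c 2 * c 7 * c 1 * c 4 = 0} ∧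
    volume {c : Fin 8 → ℂ | ∃ α1 α2 : ℂ, (α1, α2) ≠ (0, 0) ∧
        c 0 * α1 * c 6 + c 2 * α2 * c 7 = 0 ∧
        c 1 * α1 * c 4 + c 3 * α2 * c 5 = 0} = 0 := by
  have hsub : {c : Fin 8 → ℂ | ∃ α1 α2 : ℂ, (α1, α2) ≠ (0, 0) ∧
        c 0 * α1 * c 6 + c 2 * α2 * c 7 = 0 ∧
        c 1 * α1 * c 4 + c 3 * α2 * c 5 = 0}
      ⊆ {c : Fin 8 → ℂ | c 0 * c 6 * c 3 * c 5 - c 2 * c 7 * c 1 * c 4 = 0} := by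
    rintro c ⟨α1, α2, hne, h1, h2⟩
    have hα : α1 ≠ 0 ∨ α2 ≠ 0 := by
      by_contra h
      push_neg at h
      exact hne (by rw [h.1, h.2])
    have e1 : (c 0 * c 6 * c 3 * c 5 - c 2 * c 7 * c 1 * c 4) * α1 = 0 := by
      linear_combination c 3 * c 5 * h1 - c 2 * c 7 * h2
    have e2 : (c 0 * c 6 * c 3 * c 5 - c 2 * c 7 * c 1 * c 4) * α2 = 0 := by
      linear_combination c 0 * c 6 * h2 - c 1 * c 4 * h1
    rcases hα with h | h
    · exact (mul_eq_zero.1 e1).resolve_right h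
    · exact (mul_eq_zero.1 e2).resolve_right h
  refine ⟨hsub, measure_mono_null hsub ?_⟩
  have hZsub : {c : Fin 8 → ℂ | c 0 * c 6 * c 3 * c 5 - c 2 * c 7 * c 1 * c 4 = 0}
      ⊆ {c : Fin 8 → ℂ | c 3 = 0} ∪ {c | c 5 = 0} ∪ {c | c 6 = 0} ∪
        {c | c 0 * c 6 * c 3 * c 5 - c 2 * c 7 * c 1 * c 4 = 0 ∧ c 3 * c 5 * c 6 ≠ 0} := by
    intro c hc
    by_cases h : c 3 * c 5 * c 6 = 0
    · rcases mul_eq_zero.1 h with h | h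
      · rcases mul_eq_zero.1 h with h | h
        · exact Or.inl (Or.inl (Or.inl h))
        · exact Or.inl (Or.inl (Or.inr h))
      · exact Or.inl (Or.inr h)
    · exact Or.inr ⟨hc, h⟩
  refine measure_mono_null hZsub ?_
  refine measure_union_null (measure_union_null (measure_union_null ?_ ?_) ?_) ?_
  · exact hyperplane_null 3
  · exact hyperplane_null 5
  · exact hyperplane_null 6
  · exact badset_null
end

section
/- Let M ≥ 2, let G11, G12 be M×M real matrices, and let v_{R1,1}, …, v_{R1,M} and v_{R2,1}, …, v_{R2,M−1} be vectors in ℝ^M satisfying G11·v_{R1,i+1} = −G12·v_{R2,i} for all i ∈ {1, …, M−1}. Then for all real scalars x_{1,1}, …, x_{1,M} and x_{2,1}, …, x_{2,M−1} (with the convention x_{2,0} = 0): G11·(Σ_{k=1}^{M} v_{R1,k}·(x_{1,k} + x_{2,k−1})) + G12·(Σ_{k=1}^{M−1} v_{R2,k}·(x_{1,k} + x_{2,k})) = G11·v_{R1,1}·x_{1,1} + Σ_{i=1}^{M−1} G11·v_{R1,i+1}·(x_{1,i+1} − x_{1,i}). In particular, all symbols x_{2,k} of the second source are cancelled at the first destination.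 -/
open Matrix Finset

theorem sum_Icc_one_succ_eq_add_sum_Icc_shift {E : Type*} [AddCommMonoid E] (n : ℕ)
    (f : ℕ → E) : ∑ k ∈ Icc 1 (n + 1), f k = f 1 + ∑ i ∈ Icc 1 n, f (i + 1) := by
  rw [Icc_eq_cons_Ioc (by omega), sum_cons, ← Icc_add_one_left_eq_Ioc, ← map_add_right_Icc,
    sum_map]
  rfl

/-- Each `b i` with `i ≥ 1` is carried by both `u (i + 1)` and `w i`, which cancel; `b 0` is
carried by `u 1` alone. -/
theorem sum_smul_add_sum_smul_eq_of_neutralizing {R E : Type*} [Ring R] [AddCommGroup E]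
    [Module R E] (n : ℕ) (u w : ℕ → E) (huw : ∀ i ∈ Icc 1 n, u (i + 1) = -w i)
    (a b : ℕ → R) (hb : b 0 = 0) :
    ∑ k ∈ Icc 1 (n + 1), (a k + b (k - 1)) • u k + ∑ k ∈ Icc 1 n, (a k + b k) • w k =
      a 1 • u 1 + ∑ i ∈ Icc 1 n, (a (i + 1) - a i) • u (i + 1) := by
  rw [sum_Icc_one_succ_eq_add_sum_Icc_shift, Nat.sub_self, hb, add_zero, add_assoc,
    ← sum_add_distrib]
  congr 1
  refine sum_congr rfl fun i hi => ?_
  rw [Nat.add_sub_cancel, neg_eq_iff_eq_neg.mp (huw i hi).symm, smul_neg, ← sub_eq_add_neg,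
    ← sub_smul, add_sub_add_right_eq_sub]

/-- Over-the-air interference neutralization at destination `D1`: if
`G11 v_{R1,i+1} = −G12 v_{R2,i}` for `i ∈ {1,…,M-1}`, then the superposition of
the two relays' transmissions contains no symbol of the second source. -/
theorem neutralization_at_D1 (M : ℕ) (hM : 2 ≤ M)
    (G11 G12 : Matrix (Fin M) (Fin M) ℝ)
    (vR1 : ℕ → Fin M → ℝ) (vR2 : ℕ → Fin M → ℝ)
    (hneu : ∀ i ∈ Finset.Icc 1 (M - 1),
      G11.mulVec (vR1 (i + 1)) = -(G12.mulVec (vR2 i)))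
    (x1 : ℕ → ℝ) (x2 : ℕ → ℝ) (hx20 : x2 0 = 0) :
    G11.mulVec (∑ k ∈ Finset.Icc 1 M, (x1 k + x2 (k - 1)) • vR1 k) +
      G12.mulVec (∑ k ∈ Finset.Icc 1 (M - 1), (x1 k + x2 k) • vR2 k) =
    x1 1 • G11.mulVec (vR1 1) +
      ∑ i ∈ Finset.Icc 1 (M - 1), (x1 (i + 1) - x1 i) • G11.mulVec (vR1 (i + 1)) := by
  obtain ⟨n, rfl⟩ : ∃ n, M = n + 1 := ⟨M - 1, by omega⟩
  simp only [mulVec_sum, mulVec_smul, Nat.add_sub_cancel] at hneu ⊢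
  exact sum_smul_add_sum_smul_eq_of_neutralizing n (fun k => G11 *ᵥ vR1 k)
    (fun k => G12 *ᵥ vR2 k) hneu x1 x2 hx20
end

section
/- Let M ≥ 2, let G21, G22 be M×M real matrices, and let v_{R1,1}, …, v_{R1,M} and v_{R2,1}, …, v_{R2,M−1} be vectors in ℝ^M satisfying G21·v_{R1,i} = −G22·v_{R2,i} for all i ∈ {1, …, M−1}. Then for all real scalars x_{1,1}, …, x_{1,M} and x_{2,1}, …, x_{2,M−1} (with the convention x_{2,0} = 0): G21·(Σ_{k=1}^{M} v_{R1,k}·(x_{1,k} + x_{2,k−1})) + G22·(Σ_{k=1}^{M−1} v_{R2,k}·(x_{1,k} + x_{2,k})) = G21·v_{R1,M}·(x_{1,M} + x_{2,M−1}) + Σ_{i=1}^{M−1} G22·v_{R2,i}·(x_{2,i} − x_{2,i−1}). In particular, the symbols x_{1,1}, …, x_{1,M−1} of the first source are cancelled at the second destination. -/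
open Matrix Finset

/-- Over-the-air interference neutralization at destination `D2`: if
`G21 v_{R1,i} = −G22 v_{R2,i}` for `i ∈ {1,…,M-1}`, then the superposition of
the two relays' transmissions contains none of the symbols
`x_{1,1}, …, x_{1,M-1}` of the first source. -/
theorem neutralization_at_D2 (M : ℕ) (hM : 2 ≤ M)
    (G21 G22 : Matrix (Fin M) (Fin M) ℝ)
    (vR1 : ℕ → Fin M → ℝ) (vR2 : ℕ → Fin M → ℝ)
    (hneu : ∀ i ∈ Finset.Icc 1 (M - 1),
      G21.mulVec (vR1 i) = -(G22.mulVec (vR2 i)))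
    (x1 : ℕ → ℝ) (x2 : ℕ → ℝ) (hx20 : x2 0 = 0) :
    G21.mulVec (∑ k ∈ Finset.Icc 1 M, (x1 k + x2 (k - 1)) • vR1 k) +
      G22.mulVec (∑ k ∈ Finset.Icc 1 (M - 1), (x1 k + x2 k) • vR2 k) =
    (x1 M + x2 (M - 1)) • G21.mulVec (vR1 M) +
      ∑ i ∈ Finset.Icc 1 (M - 1), (x2 i - x2 (i - 1)) • G22.mulVec (vR2 i) := by
  have hM1 : M - 1 + 1 = M := by omega
  have h1 : G21.mulVec (∑ k ∈ Finset.Icc 1 M, (x1 k + x2 (k - 1)) • vR1 k)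
      = ∑ k ∈ Finset.Icc 1 M, (x1 k + x2 (k - 1)) • G21.mulVec (vR1 k) := by
    rw [← Matrix.mulVecLin_apply, map_sum]
    simp [Matrix.mulVecLin_apply]
  have h2 : G22.mulVec (∑ k ∈ Finset.Icc 1 (M - 1), (x1 k + x2 k) • vR2 k)
      = ∑ k ∈ Finset.Icc 1 (M - 1), (x1 k + x2 k) • G22.mulVec (vR2 k) := by
    rw [← Matrix.mulVecLin_apply, map_sum]
    simp [Matrix.mulVecLin_apply]
  rw [h1, h2]
  have hsplit : ∑ k ∈ Finset.Icc 1 M, (x1 k + x2 (k - 1)) • G21.mulVec (vR1 k)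
      = (∑ k ∈ Finset.Icc 1 (M - 1), (x1 k + x2 (k - 1)) • G21.mulVec (vR1 k))
        + (x1 M + x2 (M - 1)) • G21.mulVec (vR1 M) := by
    have hins : Finset.Icc 1 M = insert M (Finset.Icc 1 (M - 1)) := by
      ext k
      simp only [Finset.mem_Icc, Finset.mem_insert]
      omega
    rw [hins, Finset.sum_insert (by simp [Finset.mem_Icc]; omega), add_comm]
  rw [hsplit, add_right_comm, add_comm]
  congr 1
  rw [← Finset.sum_add_distrib]
  apply Finset.sum_congr rfl
  intro i hi
  rw [hneu i hi]
  module
end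

section
/- Let M ≥ 2 and let F11, F12, F21, F22, G11, G12, G21, G22 be invertible diagonal M×M real matrices such that the diagonal matrices A = F11⁻¹·F12·F22⁻¹·F21 and A' = G11⁻¹·G12·G22⁻¹·G21 each have pairwise distinct diagonal entries. Then there exist vectors v_{1,1}, …, v_{1,M}, v_{R1,1}, …, v_{R1,M} ∈ ℝ^M and v_{2,1}, …, v_{2,M−1}, v_{R2,1}, …, v_{R2,M−1} ∈ ℝ^M such that: (a) F11·v_{1,i+1} = F12·v_{2,i} and F21·v_{1,i} = F22·v_{2,i} for all i ∈ {1, …, M−1}; (b) G11·v_{R1,i+1} = −G12·v_{R2,i} and G21·v_{R1,i} = −G22·v_{R2,i} for all i ∈ {1, …, M−1}; (c) the family v_{1,1}, …, v_{1,M} is linearly independent; and (d) the family v_{R1,1}, …, v_{R1,M} is linearly independent. -/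
open Matrix Finset

private lemma core_hop (M : ℕ) (F11 F12 F21 F22 : Matrix (Fin M) (Fin M) ℝ)
    (hF11u : IsUnit F11) (hF22u : IsUnit F22)
    (hAd : (F11⁻¹ * F12 * F22⁻¹ * F21).IsDiag)
    (hA : Function.Injective (fun m : Fin M => (F11⁻¹ * F12 * F22⁻¹ * F21) m m)) :
    ∃ v1 v2 : ℕ → Fin M → ℝ,
      (∀ i ∈ Finset.Icc 1 (M - 1),
        F11.mulVec (v1 (i + 1)) = F12.mulVec (v2 i) ∧
        F21.mulVec (v1 i) = F22.mulVec (v2 i)) ∧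
      LinearIndependent ℝ (fun i : Fin M => v1 ((i : ℕ) + 1)) := by
  set A := F11⁻¹ * F12 * F22⁻¹ * F21 with hAdef
  set a : Fin M → ℝ := fun m => A m m with ha
  have hAeq : A = diagonal a := hAd.diagonal_diag.symm
  have hdet11 : IsUnit F11.det := (Matrix.isUnit_iff_isUnit_det _).mp hF11u
  have hdet22 : IsUnit F22.det := (Matrix.isUnit_iff_isUnit_det _).mp hF22u
  refine ⟨fun n m => a m ^ (n - 1), fun n => (F22⁻¹ * F21).mulVec (fun m => a m ^ (n - 1)),
    ?_, ?_⟩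
  · intro i hi
    have hi1 : 1 ≤ i := (Finset.mem_Icc.mp hi).1
    constructor
    · rw [mulVec_mulVec]
      have h1 : F12 * (F22⁻¹ * F21) = F11 * A := by
        rw [hAdef]
        rw [show F11 * (F11⁻¹ * F12 * F22⁻¹ * F21) = F11 * F11⁻¹ * (F12 * (F22⁻¹ * F21)) by
          noncomm_ring, Matrix.mul_nonsing_inv _ hdet11, one_mul]
      have hv : (fun m => a m ^ (i + 1 - 1)) = (diagonal a) *ᵥ (fun m => a m ^ (i - 1)) := by
        funext m
        rw [mulVec_diagonal, show i + 1 - 1 = (i - 1) + 1 from by omega, pow_succ]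
        ring
      rw [h1, ← mulVec_mulVec, hAeq, ← hv]
    · rw [mulVec_mulVec, show F22 * (F22⁻¹ * F21) = F21 by
        rw [← mul_assoc, Matrix.mul_nonsing_inv _ hdet22, one_mul]]
  · have : (fun i : Fin M => (fun m => a m ^ ((i : ℕ) + 1 - 1))) =
        fun i : Fin M => (vandermonde a)ᵀ i := by
      funext i m
      simp [vandermonde]
    rw [this]
    exact linearIndependent_cols_iff_isUnit.mpr
      ((Matrix.isUnit_iff_isUnit_det _).mpr (det_vandermonde_ne_zero_iff.mpr hA).isUnit)

/-- Linear-algebraic core of the achievability of 2 DoF for the `2×2×2`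
interference channel: given invertible diagonal channel matrices whose
effective products `F11⁻¹F12F22⁻¹F21` and `G11⁻¹G12G22⁻¹G21` have pairwise
distinct diagonal entries, there exist beamforming vectors satisfying the
first-hop alignment conditions, the second-hop neutralization conditions, and
the required linear independence. -/
theorem aligned_interference_neutralization_exists (M : ℕ) (hM : 2 ≤ M)
    (F11 F12 F21 F22 G11 G12 G21 G22 : Matrix (Fin M) (Fin M) ℝ)
    (hF11d : F11.IsDiag) (hF12d : F12.IsDiag) (hF21d : F21.IsDiag) (hF22d : F22.IsDiag)
    (hG11d : G11.IsDiag) (hG12d : G12.IsDiag) (hG21d : G21.IsDiag) (hG22d : G22.IsDiag)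
    (hF11u : IsUnit F11) (hF12u : IsUnit F12) (hF21u : IsUnit F21) (hF22u : IsUnit F22)
    (hG11u : IsUnit G11) (hG12u : IsUnit G12) (hG21u : IsUnit G21) (hG22u : IsUnit G22)
    (hA : Function.Injective (fun m : Fin M => (F11⁻¹ * F12 * F22⁻¹ * F21) m m))
    (hA' : Function.Injective (fun m : Fin M => (G11⁻¹ * G12 * G22⁻¹ * G21) m m)) :
    ∃ v1 v2 vR1 vR2 : ℕ → Fin M → ℝ,
      (∀ i ∈ Finset.Icc 1 (M - 1),
        F11.mulVec (v1 (i + 1)) = F12.mulVec (v2 i) ∧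
        F21.mulVec (v1 i) = F22.mulVec (v2 i)) ∧
      (∀ i ∈ Finset.Icc 1 (M - 1),
        G11.mulVec (vR1 (i + 1)) = -(G12.mulVec (vR2 i)) ∧
        G21.mulVec (vR1 i) = -(G22.mulVec (vR2 i))) ∧
      LinearIndependent ℝ (fun i : Fin M => v1 ((i : ℕ) + 1)) ∧
      LinearIndependent ℝ (fun i : Fin M => vR1 ((i : ℕ) + 1)) := by
  have diag_prod : ∀ (B11 B12 B21 B22 : Matrix (Fin M) (Fin M) ℝ),
      B11.IsDiag → B12.IsDiag → B21.IsDiag → B22.IsDiag →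
      (B11⁻¹ * B12 * B22⁻¹ * B21).IsDiag := by
    intro B11 B12 B21 B22 h11 h12 h21 h22
    rw [← h11.diagonal_diag, ← h12.diagonal_diag, ← h21.diagonal_diag, ← h22.diagonal_diag,
      Matrix.inv_diagonal, Matrix.inv_diagonal, diagonal_mul_diagonal, diagonal_mul_diagonal,
      diagonal_mul_diagonal]
    exact isDiag_diagonal _
  obtain ⟨v1, v2, hFcond, hFli⟩ :=
    core_hop M F11 F12 F21 F22 hF11u hF22u (diag_prod _ _ _ _ hF11d hF12d hF21d hF22d) hA
  -- second hop: apply the core lemma to `-G12` and `-G22`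
  have hG22inv : (-G22)⁻¹ = -(G22⁻¹) := by
    apply Matrix.inv_eq_right_inv
    rw [neg_mul_neg, Matrix.mul_nonsing_inv _ ((Matrix.isUnit_iff_isUnit_det _).mp hG22u)]
  have hGprod : G11⁻¹ * (-G12) * (-G22)⁻¹ * G21 = G11⁻¹ * G12 * G22⁻¹ * G21 := by
    rw [hG22inv]
    simp [mul_neg, neg_mul]
  obtain ⟨vR1, vR2, hGcond, hGli⟩ :=
    core_hop M G11 (-G12) G21 (-G22) hG11u hG22u.neg
      (by rw [hGprod]; exact diag_prod _ _ _ _ hG11d hG12d hG21d hG22d)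
      (by rw [hGprod]; exact hA')
  refine ⟨v1, v2, vR1, vR2, hFcond, ?_, hFli, hGli⟩
  intro i hi
  obtain ⟨h1, h2⟩ := hGcond i hi
  rw [Matrix.neg_mulVec] at h1 h2
  exact ⟨h1, h2⟩
end

section
/- Let U(φ) denote the 2×2 real rotation matrix [[cos φ, −sin φ], [sin φ, cos φ]]. Let F_{kj} = r_{kj}·U(φ_{kj}) and G_{kj} = s_{kj}·U(θ_{kj}) for k, j ∈ {1,2}, with all r_{kj}, s_{kj} > 0. Assume φ12 + φ21 − φ11 − φ22 ≢ 0 (mod π) and θ12 + θ21 − θ11 − θ22 ≢ 0 (mod π). Then there exist nonzero vectors v_{1,1}, v_{1,2}, v_2, v_{R1,1}, v_{R1,2}, v_{R2} ∈ ℝ² such that F11·v_{1,2} = F12·v_2, F21·v_{1,1} = F22·v_2, G11·v_{R1,2} = −G12·v_{R2}, G21·v_{R1,1} = −G22·v_{R2}, and moreover {v_{1,1}, v_{1,2}} is linearly independent and {v_{R1,1}, v_{R1,2}} is linearly independent. -/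
/-- The 2×2 rotation matrix by angle `φ`. -/
noncomputable def rotMat (φ : ℝ) : Matrix (Fin 2) (Fin 2) ℝ :=
  Matrix.of ![![Real.cos φ, -Real.sin φ], ![Real.sin φ, Real.cos φ]]

noncomputable def pvec (a α : ℝ) : Fin 2 → ℝ := ![a * Real.cos α, a * Real.sin α]

lemma rot_mulVec (r φ a α : ℝ) :
    (r • rotMat φ).mulVec (pvec a α) = pvec (r * a) (φ + α) := by
  funext i
  fin_cases i <;>
  · simp [rotMat, pvec, Matrix.mulVec, dotProduct, Fin.sum_univ_two,
      Real.cos_add, Real.sin_add]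
    ring

lemma pvec_add_pi (a α : ℝ) : pvec a (α + Real.pi) = -pvec a α := by
  funext i
  fin_cases i <;> simp [pvec, Real.cos_add, Real.sin_add]

lemma pvec_ne_zero {a : ℝ} (ha : a ≠ 0) (α : ℝ) : pvec a α ≠ 0 := by
  intro h
  have h0 := congrFun h 0
  have h1 := congrFun h 1
  simp [pvec] at h0 h1
  rcases h0 with h0 | h0 <;> rcases h1 with h1 | h1 <;>
    first
      | exact ha h0
      | exact ha h1
      | (have := Real.sin_sq_add_cos_sq α; rw [h0, h1] at this; norm_num at this)

lemma li_of_cross {v w : Fin 2 → ℝ} (h : v 0 * w 1 - v 1 * w 0 ≠ 0) :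
    LinearIndependent ℝ ![v, w] := by
  rw [LinearIndependent.pair_iff]
  intro s t hst
  have h0 := congrFun hst 0
  have h1 := congrFun hst 1
  simp [Pi.add_apply] at h0 h1
  have hs : s * (v 0 * w 1 - v 1 * w 0) = 0 := by linear_combination w 1 * h0 - w 0 * h1
  have ht : t * (v 0 * w 1 - v 1 * w 0) = 0 := by linear_combination v 0 * h1 - v 1 * h0
  exact ⟨by rcases mul_eq_zero.1 hs with h'|h'; exact h'; exact absurd h' h,
         by rcases mul_eq_zero.1 ht with h'|h'; exact h'; exact absurd h' h⟩

lemma cross_pvec (b β a α : ℝ) :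
    pvec b β 0 * pvec a α 1 - pvec b β 1 * pvec a α 0 = a * b * Real.sin (α - β) := by
  simp [pvec, Real.sin_sub]
  ring

/-- Linear-algebraic core of Theorem 2 (asymmetric complex signaling): if the
channel matrices of both hops are scaled rotations `F_{kj} = r_{kj}·U(φ_{kj})`,
`G_{kj} = s_{kj}·U(θ_{kj})` and the two phase conditions
`φ12 + φ21 − φ11 − φ22 ≢ 0 (mod π)` and `θ12 + θ21 − θ11 − θ22 ≢ 0 (mod π)`
hold, then there exist nonzero beamforming vectors realizing the alignment and
neutralization conditions, with `{v_{1,1}, v_{1,2}}` and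
`{v_{R1,1}, v_{R1,2}}` linearly independent. -/
theorem asymmetric_complex_signaling (r11 r12 r21 r22 s11 s12 s21 s22 : ℝ)
    (hr11 : 0 < r11) (hr12 : 0 < r12) (hr21 : 0 < r21) (hr22 : 0 < r22)
    (hs11 : 0 < s11) (hs12 : 0 < s12) (hs21 : 0 < s21) (hs22 : 0 < s22)
    (φ11 φ12 φ21 φ22 θ11 θ12 θ21 θ22 : ℝ)
    (hφ : ∀ k : ℤ, φ12 + φ21 - φ11 - φ22 ≠ k * Real.pi)
    (hθ : ∀ k : ℤ, θ12 + θ21 - θ11 - θ22 ≠ k * Real.pi) :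
    ∃ v11 v12 v2 vR11 vR12 vR2 : Fin 2 → ℝ,
      v11 ≠ 0 ∧ v12 ≠ 0 ∧ v2 ≠ 0 ∧ vR11 ≠ 0 ∧ vR12 ≠ 0 ∧ vR2 ≠ 0 ∧
      (r11 • rotMat φ11).mulVec v12 = (r12 • rotMat φ12).mulVec v2 ∧
      (r21 • rotMat φ21).mulVec v11 = (r22 • rotMat φ22).mulVec v2 ∧
      (s11 • rotMat θ11).mulVec vR12 = -((s12 • rotMat θ12).mulVec vR2) ∧
      (s21 • rotMat θ21).mulVec vR11 = -((s22 • rotMat θ22).mulVec vR2) ∧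
      LinearIndependent ℝ ![v11, v12] ∧
      LinearIndependent ℝ ![vR11, vR12] := by
  have hsinφ : Real.sin (φ12 + φ21 - φ11 - φ22) ≠ 0 := by
    intro h
    obtain ⟨n, hn⟩ := Real.sin_eq_zero_iff.1 h
    exact hφ n hn.symm
  have hsinθ : Real.sin (θ12 + θ21 - θ11 - θ22) ≠ 0 := by
    intro h
    obtain ⟨n, hn⟩ := Real.sin_eq_zero_iff.1 h
    exact hθ n hn.symm
  refine ⟨pvec (r22 / r21) (φ22 - φ21), pvec (r12 / r11) (φ12 - φ11), pvec 1 0,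
    pvec (s22 / s21) (θ22 - θ21 + Real.pi), pvec (s12 / s11) (θ12 - θ11 + Real.pi), pvec 1 0,
    pvec_ne_zero (by positivity) _, pvec_ne_zero (by positivity) _,
    pvec_ne_zero one_ne_zero _,
    pvec_ne_zero (by positivity) _, pvec_ne_zero (by positivity) _,
    pvec_ne_zero one_ne_zero _, ?_, ?_, ?_, ?_, ?_, ?_⟩
  · rw [rot_mulVec, rot_mulVec]
    rw [show r11 * (r12 / r11) = r12 * 1 by field_simp,
        show φ11 + (φ12 - φ11) = φ12 + 0 by ring]
  · rw [rot_mulVec, rot_mulVec]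
    rw [show r21 * (r22 / r21) = r22 * 1 by field_simp,
        show φ21 + (φ22 - φ21) = φ22 + 0 by ring]
  · rw [rot_mulVec, rot_mulVec]
    rw [show θ11 + (θ12 - θ11 + Real.pi) = (θ12 + 0) + Real.pi by ring, pvec_add_pi,
        show s11 * (s12 / s11) = s12 * 1 by field_simp]
  · rw [rot_mulVec, rot_mulVec]
    rw [show θ21 + (θ22 - θ21 + Real.pi) = (θ22 + 0) + Real.pi by ring, pvec_add_pi,
        show s21 * (s22 / s21) = s22 * 1 by field_simp]
  · apply li_of_cross
    rw [cross_pvec]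
    rw [show φ12 - φ11 - (φ22 - φ21) = φ12 + φ21 - φ11 - φ22 by ring]
    positivity
  · apply li_of_cross
    rw [cross_pvec]
    rw [show θ12 - θ11 + Real.pi - (θ22 - θ21 + Real.pi) = θ12 + θ21 - θ11 - θ22 by ring]
    positivity
end
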